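/- arXiv:2510.02537 — 5 statements merged into one kernel-verified Lean document; each statement's English description precedes it below -/
import Mathlib

section
/- Let (Ω, 𝔄) be a measurable space, σ > 0, and let μ0, μ1 be finite measures on Ω. Define the curve γ(s) = (1−s)² μ0 + s² μ1 + 2(s − s²) √(μ0 μ1) for s ∈ [0,1]. Then γ(0) = μ0, γ(1) = μ1, and γ is a constant-speed geodesic for the Hellinger distance: He_σ(γ(s), γ(t)) = |s − t| · He_σ(μ0, μ1) for all s, t ∈ [0,1]. -/
open MeasureTheory ENNReal Real

variable {Ω : Type*} [MeasurableSpace Ω]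

/-- The Hellinger distance with scale parameter `σ`, computed with the
reference measure `λ = μ0 + μ1`. -/
noncomputable def hellinger (σ : ℝ) (μ0 μ1 : Measure Ω) : ℝ :=
  σ * Real.sqrt (∫ ω, (Real.sqrt ((μ0.rnDeriv (μ0 + μ1) ω).toReal)
      - Real.sqrt ((μ1.rnDeriv (μ0 + μ1) ω).toReal)) ^ 2 ∂(μ0 + μ1))

/-- The geometric mean `√(μ0 μ1)` of two measures. -/
noncomputable def geomMean (μ0 μ1 : Measure Ω) : Measure Ω :=
  (μ0 + μ1).withDensity
    (fun ω => (μ0.rnDeriv (μ0 + μ1) ω * μ1.rnDeriv (μ0 + μ1) ω) ^ (1/2 : ℝ))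

/-- The Hellinger geodesic `γ(s) = (1−s)² μ0 + s² μ1 + 2(s−s²) √(μ0 μ1)`. -/
noncomputable def helGeodesic (μ0 μ1 : Measure Ω) (s : ℝ) : Measure Ω :=
  ENNReal.ofReal ((1 - s) ^ 2) • μ0 + ENNReal.ofReal (s ^ 2) • μ1 +
    ENNReal.ofReal (2 * (s - s ^ 2)) • geomMean μ0 μ1


/-! With `f`, `g` the densities of `μ0`, `μ1` with respect to `μ0 + μ1`, the curve `γ(s)` has density
`((1 - s) √f + s √g) ^ 2`, so `√(dγ(s))` is affine in `s`. Since the Hellinger integral may be computed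
against any common reference measure, computing it against `μ0 + μ1` gives
`(√(dγ(s)) - √(dγ(t))) ^ 2 = (s - t) ^ 2 (√f - √g) ^ 2` pointwise. -/

lemma Real.mul_sqrt_sub_sqrt_sq {a b c : ℝ} (ha : 0 ≤ a) (hb : 0 ≤ b) (hc : 0 ≤ c) :
    c * (√a - √b) ^ 2 = (√(a * c) - √(b * c)) ^ 2 := by
  rw [Real.sqrt_mul ha, Real.sqrt_mul hb]
  linear_combination (-(√a - √b) ^ 2) * Real.sq_sqrt hc

lemma Real.sqrt_geodesic_interpolation {s a b : ℝ} (hs : s ∈ Set.Icc (0 : ℝ) 1)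
    (ha : 0 ≤ a) (hb : 0 ≤ b) :
    √((1 - s) ^ 2 * a + s ^ 2 * b + 2 * (s - s ^ 2) * √(a * b)) = (1 - s) * √a + s * √b := by
  obtain ⟨hs0, hs1⟩ := hs
  rw [← Real.sqrt_sq (by positivity : 0 ≤ (1 - s) * √a + s * √b), Real.sqrt_mul ha]
  congr 1
  linear_combination (-(1 - s) ^ 2) * Real.sq_sqrt ha - s ^ 2 * Real.sq_sqrt hb

section WithDensity

variable {ν : Measure Ω} [SigmaFinite ν]

lemma rnDeriv_withDensity_mul_ae_eq {p w : Ω → ℝ≥0∞} (hp : Measurable p) (hw : Measurable w)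
    (hp_ne_top : ∀ᵐ ω ∂ν, p ω ≠ ∞) (hw_ne_top : ∀ᵐ ω ∂ν, w ω ≠ ∞)
    (hpw : ν.withDensity p ≪ ν.withDensity w) :
    (fun ω ↦ (ν.withDensity p).rnDeriv (ν.withDensity w) ω * w ω) =ᵐ[ν] p := by
  have := SigmaFinite.withDensity_of_ne_top hp_ne_top
  have := SigmaFinite.withDensity_of_ne_top hw_ne_top
  filter_upwards [Measure.rnDeriv_mul_rnDeriv hpw (κ := ν), Measure.rnDeriv_withDensity ν hw,
    Measure.rnDeriv_withDensity ν hp] with ω hchain hw_rn hp_rn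
  rw [← hw_rn, ← hp_rn]
  exact hchain

/-- Changing the reference measure from `ν` to `ν.withDensity (p + q)` multiplies the integrand
by `p + q`. -/
lemma hellinger_withDensity (σ : ℝ) {p q : Ω → ℝ≥0∞} (hp : Measurable p) (hq : Measurable q)
    (hp_ne_top : ∀ᵐ ω ∂ν, p ω ≠ ∞) (hq_ne_top : ∀ᵐ ω ∂ν, q ω ≠ ∞) :
    hellinger σ (ν.withDensity p) (ν.withDensity q) =
      σ * √(∫ ω, (√(p ω).toReal - √(q ω).toReal) ^ 2 ∂ν) := by
  have hpq_ne_top : ∀ᵐ ω ∂ν, (p + q) ω ≠ ∞ := by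
    filter_upwards [hp_ne_top, hq_ne_top] with ω hpω hqω using ENNReal.add_ne_top.2 ⟨hpω, hqω⟩
  have hp_ac : ν.withDensity p ≪ ν.withDensity (p + q) :=
    (withDensity_mono (ae_of_all _ fun _ ↦ le_self_add)).absolutelyContinuous
  have hq_ac : ν.withDensity q ≪ ν.withDensity (p + q) :=
    (withDensity_mono (ae_of_all _ fun _ ↦ le_add_self)).absolutelyContinuous
  unfold hellinger
  rw [← withDensity_add_left hp, integral_withDensity_eq_integral_toReal_smul (hp.add hq)
    (hpq_ne_top.mono fun _ ↦ Ne.lt_top)]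
  congr 2
  refine integral_congr_ae ?_
  filter_upwards [rnDeriv_withDensity_mul_ae_eq hp (hp.add hq) hp_ne_top hpq_ne_top hp_ac,
    rnDeriv_withDensity_mul_ae_eq hq (hp.add hq) hq_ne_top hpq_ne_top hq_ac] with ω hpω hqω
  rw [smul_eq_mul, Real.mul_sqrt_sub_sqrt_sq toReal_nonneg toReal_nonneg toReal_nonneg,
    ← toReal_mul, ← toReal_mul, hpω, hqω]

end WithDensity

/-- The density of `helGeodesic μ0 μ1 s` at a point where `μ0` and `μ1` have densities `x` and `y`. -/
noncomputable def helGeodesicDensity (s : ℝ) (x y : ℝ≥0∞) : ℝ≥0∞ :=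
  ENNReal.ofReal ((1 - s) ^ 2) * x + ENNReal.ofReal (s ^ 2) * y +
    ENNReal.ofReal (2 * (s - s ^ 2)) * (x * y) ^ (1/2 : ℝ)

section HelGeodesicDensity

variable {x y : ℝ≥0∞}

lemma helGeodesicDensity_ne_top (hx : x ≠ ∞) (hy : y ≠ ∞) (s : ℝ) :
    helGeodesicDensity s x y ≠ ∞ := by
  have hxy : (x * y) ^ (1/2 : ℝ) ≠ ∞ := rpow_ne_top_of_nonneg (by norm_num) (mul_ne_top hx hy)
  unfold helGeodesicDensity
  finiteness

lemma sqrt_toReal_helGeodesicDensity (hx : x ≠ ∞) (hy : y ≠ ∞) {s : ℝ}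
    (hs : s ∈ Set.Icc (0 : ℝ) 1) :
    √(helGeodesicDensity s x y).toReal = (1 - s) * √x.toReal + s * √y.toReal := by
  have h2s : 0 ≤ 2 * (s - s ^ 2) := by nlinarith [hs.1, hs.2]
  have hxy : (x * y) ^ (1/2 : ℝ) ≠ ∞ := rpow_ne_top_of_nonneg (by norm_num) (mul_ne_top hx hy)
  unfold helGeodesicDensity
  rw [toReal_add (by finiteness) (by finiteness), toReal_add (by finiteness) (by finiteness)]
  simp only [toReal_mul, toReal_ofReal (sq_nonneg _), toReal_ofReal h2s, ← toReal_rpow,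
    ← Real.sqrt_eq_rpow]
  exact Real.sqrt_geodesic_interpolation hs toReal_nonneg toReal_nonneg

end HelGeodesicDensity

lemma withDensity_helGeodesicDensity (ν : Measure Ω) {f g : Ω → ℝ≥0∞} (hf : Measurable f)
    (hg : Measurable g) (s : ℝ) :
    ν.withDensity (fun ω ↦ helGeodesicDensity s (f ω) (g ω)) =
      ENNReal.ofReal ((1 - s) ^ 2) • ν.withDensity f + ENNReal.ofReal (s ^ 2) • ν.withDensity g +
        ENNReal.ofReal (2 * (s - s ^ 2)) • ν.withDensity (fun ω ↦ (f ω * g ω) ^ (1/2 : ℝ)) := by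
  rw [← withDensity_smul _ hf, ← withDensity_smul _ hg, ← withDensity_smul _ (by fun_prop),
    ← withDensity_add_left (by fun_prop), ← withDensity_add_left (by fun_prop)]
  rfl

lemma helGeodesic_eq_withDensity (μ0 μ1 : Measure Ω) [SigmaFinite μ0] [SigmaFinite μ1] (s : ℝ) :
    helGeodesic μ0 μ1 s = (μ0 + μ1).withDensity
      (fun ω ↦ helGeodesicDensity s (μ0.rnDeriv (μ0 + μ1) ω) (μ1.rnDeriv (μ0 + μ1) ω)) := by
  rw [withDensity_helGeodesicDensity _ (Measure.measurable_rnDeriv _ _)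
    (Measure.measurable_rnDeriv _ _), Measure.withDensity_rnDeriv_eq _ _
    (Measure.AbsolutelyContinuous.rfl.add_right μ1), Measure.withDensity_rnDeriv_eq _ _
    (Measure.AbsolutelyContinuous.rfl.add_right' μ0)]
  rfl

lemma helGeodesic_zero (μ0 μ1 : Measure Ω) : helGeodesic μ0 μ1 0 = μ0 := by
  simp [helGeodesic]

lemma helGeodesic_one (μ0 μ1 : Measure Ω) : helGeodesic μ0 μ1 1 = μ1 := by
  simp [helGeodesic]

theorem helGeodesic_is_constant_speed_geodesic_general (σ : ℝ)
    (μ0 μ1 : Measure Ω) [IsFiniteMeasure μ0] [IsFiniteMeasure μ1] :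
    helGeodesic μ0 μ1 0 = μ0 ∧ helGeodesic μ0 μ1 1 = μ1 ∧
      ∀ s ∈ Set.Icc (0:ℝ) 1, ∀ t ∈ Set.Icc (0:ℝ) 1,
        hellinger σ (helGeodesic μ0 μ1 s) (helGeodesic μ0 μ1 t) =
          |s - t| * hellinger σ μ0 μ1 := by
  refine ⟨helGeodesic_zero μ0 μ1, helGeodesic_one μ0 μ1, fun s hs t ht ↦ ?_⟩
  set f := μ0.rnDeriv (μ0 + μ1)
  set g := μ1.rnDeriv (μ0 + μ1)
  have hf : ∀ᵐ ω ∂(μ0 + μ1), f ω ≠ ∞ := Measure.rnDeriv_ne_top _ _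
  have hg : ∀ᵐ ω ∂(μ0 + μ1), g ω ≠ ∞ := Measure.rnDeriv_ne_top _ _
  have hdensity (u : ℝ) : Measurable fun ω ↦ helGeodesicDensity u (f ω) (g ω) := by
    unfold helGeodesicDensity
    fun_prop
  have hdensity_ne_top (u : ℝ) : ∀ᵐ ω ∂(μ0 + μ1), helGeodesicDensity u (f ω) (g ω) ≠ ∞ := by
    filter_upwards [hf, hg] with ω hfω hgω using helGeodesicDensity_ne_top hfω hgω u
  have hintegrand : (fun ω ↦ (√(helGeodesicDensity s (f ω) (g ω)).toReal
        - √(helGeodesicDensity t (f ω) (g ω)).toReal) ^ 2)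
      =ᵐ[μ0 + μ1] fun ω ↦ (s - t) ^ 2 * (√(f ω).toReal - √(g ω).toReal) ^ 2 := by
    filter_upwards [hf, hg] with ω hfω hgω
    rw [sqrt_toReal_helGeodesicDensity hfω hgω hs, sqrt_toReal_helGeodesicDensity hfω hgω ht]
    ring
  rw [helGeodesic_eq_withDensity, helGeodesic_eq_withDensity,
    hellinger_withDensity σ (hdensity s) (hdensity t) (hdensity_ne_top s) (hdensity_ne_top t),
    integral_congr_ae hintegrand, integral_const_mul, Real.sqrt_mul (sq_nonneg _),
    Real.sqrt_sq_eq_abs, hellinger]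
  ring

theorem helGeodesic_is_constant_speed_geodesic (σ : ℝ) (hσ : 0 < σ)
    (μ0 μ1 : Measure Ω) [IsFiniteMeasure μ0] [IsFiniteMeasure μ1] :
    helGeodesic μ0 μ1 0 = μ0 ∧ helGeodesic μ0 μ1 1 = μ1 ∧
      ∀ s ∈ Set.Icc (0:ℝ) 1, ∀ t ∈ Set.Icc (0:ℝ) 1,
        hellinger σ (helGeodesic μ0 μ1 s) (helGeodesic μ0 μ1 t) =
          |s - t| * hellinger σ μ0 μ1 :=
  helGeodesic_is_constant_speed_geodesic_general σ μ0 μ1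
end

section
/- Let (Ω, 𝔄) be a measurable space, σ > 0, and let μ0, μ1, μ2 be finite measures on Ω. With the Hellinger midpoint A = (1/4) μ1 + (1/4) μ2 + (1/2) √(μ1 μ2), the parallelogram identity holds: 2 He_σ(μ0, μ1)² + 2 He_σ(μ0, μ2)² = He_σ(μ1, μ2)² + 4 He_σ(μ0, A)². -/
open MeasureTheory ENNReal Real

variable {Ω : Type*} [MeasurableSpace Ω]

/-!
Take `ρ = μ0 + μ1 + μ2` as a common reference measure. Since the Hellinger integrand is
independent of the reference measure, `He_σ(μ, ν)² = σ² ‖√(dμ/dρ) - √(dν/dρ)‖²` in `L²(ρ)`,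
and the density of the midpoint satisfies `√(dA/dρ) = (√(dμ1/dρ) + √(dμ2/dρ)) / 2`.
The identity is therefore the parallelogram law in `L²(ρ)`, i.e. the pointwise identity
`2 (a - b)² + 2 (a - c)² = (b - c)² + 4 (a - (b + c) / 2)²` integrated against `ρ`.
-/

lemma sq_sqrt_sub_sqrt_le_add {x y : ℝ} (hx : 0 ≤ x) (hy : 0 ≤ y) : (√x - √y) ^ 2 ≤ x + y := by
  nlinarith [Real.sq_sqrt hx, Real.sq_sqrt hy, Real.sqrt_nonneg x, Real.sqrt_nonneg y]

lemma sq_sqrt_mul_sub_sqrt_mul {a b g : ℝ} (ha : 0 ≤ a) (hb : 0 ≤ b) (hg : 0 ≤ g) :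
    (√(a * g) - √(b * g)) ^ 2 = (√a - √b) ^ 2 * g := by
  rw [Real.sqrt_mul ha, Real.sqrt_mul hb, ← sub_mul, mul_pow, Real.sq_sqrt hg]

lemma ENNReal.mul_self_rpow_one_div_two (x : ℝ≥0∞) : (x * x) ^ (1/2 : ℝ) = x := by
  rw [← sq, ← ENNReal.rpow_natCast x 2, ← ENNReal.rpow_mul]
  norm_num

lemma ENNReal.mul_rpow_one_div_two_le_add (x y : ℝ≥0∞) : (x * y) ^ (1/2 : ℝ) ≤ x + y :=
  calc (x * y) ^ (1/2 : ℝ) ≤ ((x + y) * (x + y)) ^ (1/2 : ℝ) :=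
        ENNReal.rpow_le_rpow (mul_le_mul' le_self_add le_add_self) (by norm_num)
    _ = x + y := ENNReal.mul_self_rpow_one_div_two _

lemma integrable_sq_sqrt_rnDeriv_sub (μ ν ρ : Measure Ω) [IsFiniteMeasure μ] [IsFiniteMeasure ν] :
    Integrable (fun ω => (√(μ.rnDeriv ρ ω).toReal - √(ν.rnDeriv ρ ω).toReal) ^ 2) ρ := by
  refine ((Measure.integrable_toReal_rnDeriv (μ := μ)).add
    (Measure.integrable_toReal_rnDeriv (μ := ν))).mono' ?_ ?_
  · exact (((Measure.measurable_rnDeriv μ ρ).ennreal_toReal.sqrt.sub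
      (Measure.measurable_rnDeriv ν ρ).ennreal_toReal.sqrt).pow_const 2).aestronglyMeasurable
  · refine .of_forall fun ω => ?_
    rw [Real.norm_of_nonneg (sq_nonneg _)]
    exact sq_sqrt_sub_sqrt_le_add ENNReal.toReal_nonneg ENNReal.toReal_nonneg

lemma integral_sq_sqrt_rnDeriv_sub_of_absolutelyContinuous {μ ν κ ρ : Measure Ω}
    [SigmaFinite μ] [SigmaFinite ν] [SigmaFinite κ] [SigmaFinite ρ]
    (hμ : μ ≪ κ) (hν : ν ≪ κ) (hκ : κ ≪ ρ) :
    ∫ ω, (√(μ.rnDeriv ρ ω).toReal - √(ν.rnDeriv ρ ω).toReal) ^ 2 ∂ρ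
      = ∫ ω, (√(μ.rnDeriv κ ω).toReal - √(ν.rnDeriv κ ω).toReal) ^ 2 ∂κ := by
  rw [← integral_rnDeriv_smul hκ]
  refine integral_congr_ae ?_
  filter_upwards [Measure.rnDeriv_mul_rnDeriv hμ (κ := ρ),
    Measure.rnDeriv_mul_rnDeriv hν (κ := ρ)] with ω hμω hνω
  rw [← hμω, ← hνω, Pi.mul_apply, Pi.mul_apply, ENNReal.toReal_mul, ENNReal.toReal_mul,
    sq_sqrt_mul_sub_sqrt_mul ENNReal.toReal_nonneg ENNReal.toReal_nonneg ENNReal.toReal_nonneg,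
    smul_eq_mul, mul_comm]

lemma hellinger_sq_eq_integral (σ : ℝ) {μ ν ρ : Measure Ω} [IsFiniteMeasure μ] [IsFiniteMeasure ν]
    [SigmaFinite ρ] (hμ : μ ≪ ρ) (hν : ν ≪ ρ) :
    hellinger σ μ ν ^ 2
      = σ ^ 2 * ∫ ω, (√(μ.rnDeriv ρ ω).toReal - √(ν.rnDeriv ρ ω).toReal) ^ 2 ∂ρ := by
  rw [hellinger, mul_pow, Real.sq_sqrt (integral_nonneg fun _ => sq_nonneg _),
    integral_sq_sqrt_rnDeriv_sub_of_absolutelyContinuous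
      (Measure.AbsolutelyContinuous.rfl.add_right ν)
      (Measure.AbsolutelyContinuous.rfl.add_right' μ) (hμ.add_left hν)]

instance (μ ν : Measure Ω) [IsFiniteMeasure μ] [IsFiniteMeasure ν] :
    IsFiniteMeasure (geomMean μ ν) := by
  constructor
  rw [geomMean, withDensity_apply _ MeasurableSet.univ, Measure.restrict_univ]
  calc ∫⁻ ω, (μ.rnDeriv (μ + ν) ω * ν.rnDeriv (μ + ν) ω) ^ (1/2 : ℝ) ∂(μ + ν)
      ≤ ∫⁻ ω, (μ.rnDeriv (μ + ν) ω + ν.rnDeriv (μ + ν) ω) ∂(μ + ν) :=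
        lintegral_mono fun ω => ENNReal.mul_rpow_one_div_two_le_add _ _
    _ = ∫⁻ ω, μ.rnDeriv (μ + ν) ω ∂(μ + ν) + ∫⁻ ω, ν.rnDeriv (μ + ν) ω ∂(μ + ν) :=
        lintegral_add_left (Measure.measurable_rnDeriv _ _) _
    _ ≤ μ Set.univ + ν Set.univ :=
        add_le_add Measure.lintegral_rnDeriv_le Measure.lintegral_rnDeriv_le
    _ < ⊤ := ENNReal.add_lt_top.mpr ⟨measure_lt_top _ _, measure_lt_top _ _⟩

lemma rnDeriv_geomMean (μ ν ρ : Measure Ω) [SigmaFinite μ] [SigmaFinite ν] [SigmaFinite ρ] :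
    (geomMean μ ν).rnDeriv ρ =ᵐ[ρ] fun ω => (μ.rnDeriv ρ ω * ν.rnDeriv ρ ω) ^ (1/2 : ℝ) := by
  have hfin : ∀ᵐ ω ∂(μ + ν),
      (μ.rnDeriv (μ + ν) ω * ν.rnDeriv (μ + ν) ω) ^ (1/2 : ℝ) ≠ ∞ := by
    filter_upwards [Measure.rnDeriv_lt_top μ (μ + ν), Measure.rnDeriv_lt_top ν (μ + ν)]
      with ω hμω hνω
    exact ENNReal.rpow_ne_top_of_nonneg (by norm_num) (ENNReal.mul_ne_top hμω.ne hνω.ne)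
  have hmeas : Measurable
      fun ω => (μ.rnDeriv (μ + ν) ω * ν.rnDeriv (μ + ν) ω) ^ (1/2 : ℝ) :=
    ((Measure.measurable_rnDeriv _ _).mul (Measure.measurable_rnDeriv _ _)).pow_const _
  have hμκ : μ ≪ μ + ν := Measure.AbsolutelyContinuous.rfl.add_right ν
  have hνκ : ν ≪ μ + ν := Measure.AbsolutelyContinuous.rfl.add_right' μ
  filter_upwards [Measure.rnDeriv_withDensity_left hmeas.aemeasurable hfin,
    Measure.rnDeriv_mul_rnDeriv hμκ (κ := ρ), Measure.rnDeriv_mul_rnDeriv hνκ (κ := ρ)]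
    with ω hω hμω hνω
  -- `√(a b) g = √(a g · b g)`, where `g` is the density of `μ + ν` with respect to `ρ`
  rw [geomMean, hω, ← hμω, ← hνω, Pi.mul_apply, Pi.mul_apply, mul_mul_mul_comm,
    ENNReal.mul_rpow_of_nonneg _ ((μ + ν).rnDeriv ρ ω * _) (by norm_num),
    ENNReal.mul_self_rpow_one_div_two]

noncomputable def hellingerMidpoint (μ ν : Measure Ω) : Measure Ω :=
  (1/4 : ℝ≥0∞) • μ + (1/4 : ℝ≥0∞) • ν + (1/2 : ℝ≥0∞) • geomMean μ ν

lemma hellingerMidpoint_absolutelyContinuous (μ ν : Measure Ω) : hellingerMidpoint μ ν ≪ μ + ν :=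
  ((((Measure.AbsolutelyContinuous.rfl.add_right ν).smul_left _).add_left
    ((Measure.AbsolutelyContinuous.rfl.add_right' μ).smul_left _)).add_left
    ((withDensity_absolutelyContinuous _ _).smul_left _))

section Midpoint

variable (μ ν : Measure Ω) [IsFiniteMeasure μ] [IsFiniteMeasure ν]

instance : IsFiniteMeasure ((1/4 : ℝ≥0∞) • μ) := μ.smul_finite (by norm_num)

instance : IsFiniteMeasure ((1/2 : ℝ≥0∞) • geomMean μ ν) := (geomMean μ ν).smul_finite (by norm_num)

instance : IsFiniteMeasure (hellingerMidpoint μ ν) := by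
  unfold hellingerMidpoint
  infer_instance

lemma rnDeriv_hellingerMidpoint (ρ : Measure Ω) [SigmaFinite ρ] :
    (hellingerMidpoint μ ν).rnDeriv ρ =ᵐ[ρ] fun ω => (1/4 : ℝ≥0∞) * μ.rnDeriv ρ ω
      + (1/4 : ℝ≥0∞) * ν.rnDeriv ρ ω
      + (1/2 : ℝ≥0∞) * (μ.rnDeriv ρ ω * ν.rnDeriv ρ ω) ^ (1/2 : ℝ) := by
  filter_upwards [Measure.rnDeriv_add ((1/4 : ℝ≥0∞) • μ + (1/4 : ℝ≥0∞) • ν)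
      ((1/2 : ℝ≥0∞) • geomMean μ ν) ρ,
    Measure.rnDeriv_add ((1/4 : ℝ≥0∞) • μ) ((1/4 : ℝ≥0∞) • ν) ρ,
    Measure.rnDeriv_smul_left_of_ne_top μ ρ (r := 1/4) (by norm_num),
    Measure.rnDeriv_smul_left_of_ne_top ν ρ (r := 1/4) (by norm_num),
    Measure.rnDeriv_smul_left_of_ne_top (geomMean μ ν) ρ (r := 1/2) (by norm_num),
    rnDeriv_geomMean μ ν ρ] with ω h h' hμω hνω hgω hg
  rw [hellingerMidpoint, h, Pi.add_apply, h', Pi.add_apply, hμω, hνω, hgω, Pi.smul_apply,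
    Pi.smul_apply, Pi.smul_apply, hg, smul_eq_mul, smul_eq_mul, smul_eq_mul]

lemma sqrt_rnDeriv_hellingerMidpoint (ρ : Measure Ω) [SigmaFinite ρ] :
    ∀ᵐ ω ∂ρ, √((hellingerMidpoint μ ν).rnDeriv ρ ω).toReal
      = (√(μ.rnDeriv ρ ω).toReal + √(ν.rnDeriv ρ ω).toReal) / 2 := by
  filter_upwards [rnDeriv_hellingerMidpoint μ ν ρ, Measure.rnDeriv_lt_top μ ρ,
    Measure.rnDeriv_lt_top ν ρ] with ω hω hμω hνω
  rw [hω, ENNReal.toReal_add (by finiteness) (by finiteness),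
    ENNReal.toReal_add (by finiteness) (by finiteness)]
  simp only [ENNReal.toReal_mul, ← ENNReal.toReal_rpow, ENNReal.toReal_div, ENNReal.toReal_one,
    ENNReal.toReal_ofNat]
  set x := (μ.rnDeriv ρ ω).toReal
  set y := (ν.rnDeriv ρ ω).toReal
  have hsq : 1/4 * x + 1/4 * y + 1/2 * (x * y) ^ (1/2 : ℝ) = ((√x + √y) / 2) ^ 2 := by
    rw [← Real.sqrt_eq_rpow, Real.sqrt_mul ENNReal.toReal_nonneg, div_pow, add_sq,
      Real.sq_sqrt ENNReal.toReal_nonneg, Real.sq_sqrt ENNReal.toReal_nonneg]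
    ring
  rw [hsq, Real.sqrt_sq (by positivity)]

end Midpoint

lemma integral_sq_sqrt_rnDeriv_sub_parallelogram (μ₀ μ ν ρ : Measure Ω) [IsFiniteMeasure μ₀]
    [IsFiniteMeasure μ] [IsFiniteMeasure ν] [SigmaFinite ρ] :
    2 * ∫ ω, (√(μ₀.rnDeriv ρ ω).toReal - √(μ.rnDeriv ρ ω).toReal) ^ 2 ∂ρ
      + 2 * ∫ ω, (√(μ₀.rnDeriv ρ ω).toReal - √(ν.rnDeriv ρ ω).toReal) ^ 2 ∂ρ
      = ∫ ω, (√(μ.rnDeriv ρ ω).toReal - √(ν.rnDeriv ρ ω).toReal) ^ 2 ∂ρ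
        + 4 * ∫ ω, (√(μ₀.rnDeriv ρ ω).toReal
          - √((hellingerMidpoint μ ν).rnDeriv ρ ω).toReal) ^ 2 ∂ρ := by
  rw [← integral_const_mul, ← integral_const_mul, ← integral_const_mul,
    ← integral_add ((integrable_sq_sqrt_rnDeriv_sub _ _ _).const_mul _)
      ((integrable_sq_sqrt_rnDeriv_sub _ _ _).const_mul _),
    ← integral_add (integrable_sq_sqrt_rnDeriv_sub _ _ _)
      ((integrable_sq_sqrt_rnDeriv_sub _ _ _).const_mul _)]
  refine integral_congr_ae ?_
  filter_upwards [sqrt_rnDeriv_hellingerMidpoint μ ν ρ] with ω hω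
  rw [hω]
  ring

theorem hellinger_parallelogram_general (σ : ℝ)
    (μ0 μ1 μ2 : Measure Ω) [IsFiniteMeasure μ0] [IsFiniteMeasure μ1] [IsFiniteMeasure μ2] :
    2 * hellinger σ μ0 μ1 ^ 2 + 2 * hellinger σ μ0 μ2 ^ 2 =
      hellinger σ μ1 μ2 ^ 2 +
        4 * hellinger σ μ0
          ((1/4 : ℝ≥0∞) • μ1 + (1/4 : ℝ≥0∞) • μ2 + (1/2 : ℝ≥0∞) • geomMean μ1 μ2) ^ 2 := by
  change _ = _ + 4 * hellinger σ μ0 (hellingerMidpoint μ1 μ2) ^ 2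
  set ρ := μ0 + μ1 + μ2
  have h0 : μ0 ≪ ρ := (Measure.AbsolutelyContinuous.rfl.add_right μ1).add_right μ2
  have h1 : μ1 ≪ ρ := (Measure.AbsolutelyContinuous.rfl.add_right' μ0).add_right μ2
  have h2 : μ2 ≪ ρ := Measure.AbsolutelyContinuous.rfl.add_right' _
  have hA : hellingerMidpoint μ1 μ2 ≪ ρ :=
    (hellingerMidpoint_absolutelyContinuous μ1 μ2).trans (h1.add_left h2)
  rw [hellinger_sq_eq_integral σ h0 h1, hellinger_sq_eq_integral σ h0 h2,
    hellinger_sq_eq_integral σ h1 h2, hellinger_sq_eq_integral σ h0 hA]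
  linear_combination σ ^ 2 * integral_sq_sqrt_rnDeriv_sub_parallelogram μ0 μ1 μ2 ρ

theorem hellinger_parallelogram (σ : ℝ) (hσ : 0 < σ)
    (μ0 μ1 μ2 : Measure Ω) [IsFiniteMeasure μ0] [IsFiniteMeasure μ1] [IsFiniteMeasure μ2] :
    2 * hellinger σ μ0 μ1 ^ 2 + 2 * hellinger σ μ0 μ2 ^ 2 =
      hellinger σ μ1 μ2 ^ 2 +
        4 * hellinger σ μ0
          ((1/4 : ℝ≥0∞) • μ1 + (1/4 : ℝ≥0∞) • μ2 + (1/2 : ℝ≥0∞) • geomMean μ1 μ2) ^ 2 :=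
  hellinger_parallelogram_general σ μ0 μ1 μ2
end

section
/- Let (Ω, 𝔄) be a measurable space, σ > 0, and let μ0, μ1, η be finite measures on Ω. Let γ(s) = (1−s)² μ0 + s² μ1 + 2(s − s²) √(μ0 μ1) be the Hellinger geodesic from μ0 to μ1. Then for all s ∈ [0,1]: He_σ(γ(s), η)² = (1−s) He_σ(μ0, η)² + s He_σ(μ1, η)² − (s − s²) He_σ(μ0, μ1)². In particular the squared Hellinger distance to any fixed measure is both geodesically 2-convex and geodesically 2-concave. -/
open MeasureTheory ENNReal Real

variable {Ω : Type*} [MeasurableSpace Ω]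

/-! ### Auxiliary lemmas -/

lemma ennreal_rpow_half_mul_self (w : ℝ≥0∞) : (w * w) ^ (1/2 : ℝ) = w := by
  have h : w * w = w ^ ((2 : ℕ) : ℝ) := by
    rw [ENNReal.rpow_natCast]; ring
  rw [h, ← ENNReal.rpow_mul]
  norm_num

lemma ennreal_sqrt_mul_le (a b : ℝ≥0∞) : (a * b) ^ (1/2 : ℝ) ≤ a + b := by
  calc (a * b) ^ (1/2 : ℝ) ≤ ((a + b) * (a + b)) ^ (1/2 : ℝ) := by
        refine ENNReal.rpow_le_rpow ?_ (by norm_num)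
        exact mul_le_mul' le_self_add le_add_self
    _ = a + b := ennreal_rpow_half_mul_self _

lemma ac_add' {μ ν lam : Measure Ω} (h1 : μ ≪ lam) (h2 : ν ≪ lam) : μ + ν ≪ lam := by
  refine Measure.AbsolutelyContinuous.mk fun s hs h0 => ?_
  simp [h1 h0, h2 h0]

instance geomMean.instIsFiniteMeasure (μ0 μ1 : Measure Ω) [IsFiniteMeasure μ0]
    [IsFiniteMeasure μ1] : IsFiniteMeasure (geomMean μ0 μ1) := by
  constructor
  rw [geomMean, withDensity_apply _ MeasurableSet.univ, setLIntegral_univ]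
  calc ∫⁻ x, (μ0.rnDeriv (μ0 + μ1) x * μ1.rnDeriv (μ0 + μ1) x) ^ (1/2 : ℝ) ∂(μ0 + μ1)
      ≤ ∫⁻ x, (μ0.rnDeriv (μ0 + μ1) x + μ1.rnDeriv (μ0 + μ1) x) ∂(μ0 + μ1) :=
        lintegral_mono fun x => ennreal_sqrt_mul_le _ _
    _ < ∞ := by
        rw [lintegral_add_left (Measure.measurable_rnDeriv _ _)]
        exact ENNReal.add_lt_top.2 ⟨Measure.lintegral_rnDeriv_lt_top _ _,
          Measure.lintegral_rnDeriv_lt_top _ _⟩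

lemma isFiniteMeasure_ofReal_smul (r : ℝ) (μ : Measure Ω) [IsFiniteMeasure μ] :
    IsFiniteMeasure (ENNReal.ofReal r • μ) := by
  constructor
  rw [Measure.smul_apply, smul_eq_mul]
  exact ENNReal.mul_lt_top ENNReal.ofReal_lt_top (measure_lt_top μ _)

instance helGeodesic.instIsFiniteMeasure (μ0 μ1 : Measure Ω) [IsFiniteMeasure μ0]
    [IsFiniteMeasure μ1] (s : ℝ) : IsFiniteMeasure (helGeodesic μ0 μ1 s) := by
  haveI := isFiniteMeasure_ofReal_smul ((1 - s) ^ 2) μ0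
  haveI := isFiniteMeasure_ofReal_smul (s ^ 2) μ1
  haveI := isFiniteMeasure_ofReal_smul (2 * (s - s ^ 2)) (geomMean μ0 μ1)
  rw [helGeodesic]
  infer_instance

/-- Change of reference measure for the Hellinger integral. -/
lemma hellinger_integral_eq (μ ν lam : Measure Ω) [IsFiniteMeasure μ] [IsFiniteMeasure ν]
    [IsFiniteMeasure lam] (hμ : μ ≪ lam) (hν : ν ≪ lam) :
    ∫ ω, (Real.sqrt ((μ.rnDeriv (μ + ν) ω).toReal)
        - Real.sqrt ((ν.rnDeriv (μ + ν) ω).toReal)) ^ 2 ∂(μ + ν)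
      = ∫ ω, (Real.sqrt ((μ.rnDeriv lam ω).toReal)
        - Real.sqrt ((ν.rnDeriv lam ω).toReal)) ^ 2 ∂lam := by
  have hρ : (μ + ν) ≪ lam := ac_add' hμ hν
  rw [← integral_rnDeriv_smul hρ
    (f := fun ω => (Real.sqrt ((μ.rnDeriv (μ + ν) ω).toReal)
        - Real.sqrt ((ν.rnDeriv (μ + ν) ω).toReal)) ^ 2)]
  refine integral_congr_ae ?_
  have hμ' : μ ≪ μ + ν := Measure.absolutelyContinuous_of_le (Measure.le_add_right le_rfl)
  have hν' : ν ≪ μ + ν := Measure.absolutelyContinuous_of_le (Measure.le_add_left le_rfl)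
  filter_upwards [Measure.rnDeriv_mul_rnDeriv hμ' (κ := lam),
    Measure.rnDeriv_mul_rnDeriv hν' (κ := lam)] with x h0 h1
  have hw : Real.sqrt (((μ + ν).rnDeriv lam x).toReal)
      * Real.sqrt (((μ + ν).rnDeriv lam x).toReal) = ((μ + ν).rnDeriv lam x).toReal :=
    Real.mul_self_sqrt ENNReal.toReal_nonneg
  rw [smul_eq_mul, ← h0, ← h1, Pi.mul_apply, Pi.mul_apply, ENNReal.toReal_mul,
    ENNReal.toReal_mul, Real.sqrt_mul ENNReal.toReal_nonneg, Real.sqrt_mul ENNReal.toReal_nonneg]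
  linear_combination (-(Real.sqrt ((μ.rnDeriv (μ + ν) x).toReal)
    - Real.sqrt ((ν.rnDeriv (μ + ν) x).toReal)) ^ 2) * hw

lemma rnDeriv_geomMean_s4 (μ0 μ1 lam : Measure Ω) [IsFiniteMeasure μ0] [IsFiniteMeasure μ1]
    [IsFiniteMeasure lam] (h0 : μ0 ≪ lam) (h1 : μ1 ≪ lam) :
    (geomMean μ0 μ1).rnDeriv lam
      =ᵐ[lam] fun x => (μ0.rnDeriv lam x * μ1.rnDeriv lam x) ^ (1/2 : ℝ) := by
  have hρ : (μ0 + μ1) ≪ lam := ac_add' h0 h1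
  have hmw : Measurable ((μ0 + μ1).rnDeriv lam) := Measure.measurable_rnDeriv _ _
  have hmg : Measurable (fun x =>
      (μ0.rnDeriv (μ0 + μ1) x * μ1.rnDeriv (μ0 + μ1) x) ^ (1/2 : ℝ)) :=
    ENNReal.continuous_rpow_const.measurable.comp
      ((Measure.measurable_rnDeriv _ _).mul (Measure.measurable_rnDeriv _ _))
  have hgm : geomMean μ0 μ1 = lam.withDensity ((μ0 + μ1).rnDeriv lam * fun x =>
      (μ0.rnDeriv (μ0 + μ1) x * μ1.rnDeriv (μ0 + μ1) x) ^ (1/2 : ℝ)) := by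
    rw [withDensity_mul lam hmw hmg, Measure.withDensity_rnDeriv_eq _ _ hρ, geomMean]
  rw [hgm]
  refine (Measure.rnDeriv_withDensity lam (hmw.mul hmg)).trans ?_
  have hμ' : μ0 ≪ μ0 + μ1 := Measure.absolutelyContinuous_of_le (Measure.le_add_right le_rfl)
  have hν' : μ1 ≪ μ0 + μ1 := Measure.absolutelyContinuous_of_le (Measure.le_add_left le_rfl)
  filter_upwards [Measure.rnDeriv_mul_rnDeriv hμ' (κ := lam),
    Measure.rnDeriv_mul_rnDeriv hν' (κ := lam)] with x hx0 hx1
  have key : ∀ a b w : ℝ≥0∞, w * (a * b) ^ (1/2 : ℝ) = (a * w * (b * w)) ^ (1/2 : ℝ) := by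
    intro a b w
    rw [show a * w * (b * w) = (a * b) * (w * w) by ring,
      ENNReal.mul_rpow_of_nonneg (a * b) (w * w) (by norm_num : (0:ℝ) ≤ 1/2),
      ennreal_rpow_half_mul_self w, mul_comm]
  rw [← hx0, ← hx1, Pi.mul_apply, Pi.mul_apply]
  exact key _ _ _

lemma hellinger_sq_eq (σ : ℝ) (μ ν lam : Measure Ω) [IsFiniteMeasure μ] [IsFiniteMeasure ν]
    [IsFiniteMeasure lam] (hμ : μ ≪ lam) (hν : ν ≪ lam) :
    hellinger σ μ ν ^ 2 = σ ^ 2 * ∫ x, (Real.sqrt ((μ.rnDeriv lam x).toReal)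
        - Real.sqrt ((ν.rnDeriv lam x).toReal)) ^ 2 ∂lam := by
  rw [hellinger, mul_pow, hellinger_integral_eq μ ν lam hμ hν,
    Real.sq_sqrt (integral_nonneg fun x => sq_nonneg _)]

lemma integrable_sq_sub (μ ν lam : Measure Ω) [IsFiniteMeasure μ] [IsFiniteMeasure ν] :
    Integrable (fun x => (Real.sqrt ((μ.rnDeriv lam x).toReal)
      - Real.sqrt ((ν.rnDeriv lam x).toReal)) ^ 2) lam := by
  refine Integrable.mono' (((Measure.integrable_toReal_rnDeriv (μ := μ) (ν := lam)).add
    (Measure.integrable_toReal_rnDeriv (μ := ν) (ν := lam))).const_mul 2) ?_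
    (ae_of_all _ fun x => ?_)
  · exact (((Measure.measurable_rnDeriv μ lam).ennreal_toReal.sqrt.sub
      (Measure.measurable_rnDeriv ν lam).ennreal_toReal.sqrt).pow_const 2).aestronglyMeasurable
  · have ha : Real.sqrt ((μ.rnDeriv lam x).toReal) ^ 2 = (μ.rnDeriv lam x).toReal :=
      Real.sq_sqrt ENNReal.toReal_nonneg
    have hb : Real.sqrt ((ν.rnDeriv lam x).toReal) ^ 2 = (ν.rnDeriv lam x).toReal :=
      Real.sq_sqrt ENNReal.toReal_nonneg
    rw [Real.norm_eq_abs, abs_of_nonneg (sq_nonneg _)]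
    simp only [Pi.add_apply]
    nlinarith [sq_nonneg (Real.sqrt ((μ.rnDeriv lam x).toReal)
      + Real.sqrt ((ν.rnDeriv lam x).toReal))]

lemma rnDeriv_helGeodesic (μ0 μ1 lam : Measure Ω) [IsFiniteMeasure μ0] [IsFiniteMeasure μ1]
    [IsFiniteMeasure lam] (h0 : μ0 ≪ lam) (h1 : μ1 ≪ lam) (s : ℝ) :
    (helGeodesic μ0 μ1 s).rnDeriv lam =ᵐ[lam] fun x =>
      ENNReal.ofReal ((1 - s) ^ 2) * μ0.rnDeriv lam x
        + ENNReal.ofReal (s ^ 2) * μ1.rnDeriv lam x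
        + ENNReal.ofReal (2 * (s - s ^ 2))
            * (μ0.rnDeriv lam x * μ1.rnDeriv lam x) ^ (1/2 : ℝ) := by
  haveI := isFiniteMeasure_ofReal_smul ((1 - s) ^ 2) μ0
  haveI := isFiniteMeasure_ofReal_smul (s ^ 2) μ1
  haveI := isFiniteMeasure_ofReal_smul (2 * (s - s ^ 2)) (geomMean μ0 μ1)
  rw [helGeodesic]
  filter_upwards [Measure.rnDeriv_add
      (ENNReal.ofReal ((1 - s) ^ 2) • μ0 + ENNReal.ofReal (s ^ 2) • μ1)
      (ENNReal.ofReal (2 * (s - s ^ 2)) • geomMean μ0 μ1) lam,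
    Measure.rnDeriv_add (ENNReal.ofReal ((1 - s) ^ 2) • μ0) (ENNReal.ofReal (s ^ 2) • μ1) lam,
    Measure.rnDeriv_smul_left_of_ne_top μ0 lam (r := ENNReal.ofReal ((1 - s) ^ 2))
      ENNReal.ofReal_ne_top,
    Measure.rnDeriv_smul_left_of_ne_top μ1 lam (r := ENNReal.ofReal (s ^ 2))
      ENNReal.ofReal_ne_top,
    Measure.rnDeriv_smul_left_of_ne_top (geomMean μ0 μ1) lam
      (r := ENNReal.ofReal (2 * (s - s ^ 2))) ENNReal.ofReal_ne_top,
    rnDeriv_geomMean_s4 μ0 μ1 lam h0 h1] with x ha hb h2 h3 h4 h5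
  rw [ha, Pi.add_apply, hb, Pi.add_apply, h2, h3, h4, Pi.smul_apply, Pi.smul_apply,
    Pi.smul_apply, smul_eq_mul, smul_eq_mul, smul_eq_mul, h5]

theorem hellinger_sq_along_geodesic (σ : ℝ) (hσ : 0 < σ)
    (μ0 μ1 η : Measure Ω) [IsFiniteMeasure μ0] [IsFiniteMeasure μ1] [IsFiniteMeasure η] :
    ∀ s ∈ Set.Icc (0:ℝ) 1,
      hellinger σ (helGeodesic μ0 μ1 s) η ^ 2 =
        (1 - s) * hellinger σ μ0 η ^ 2 + s * hellinger σ μ1 η ^ 2 -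
          (s - s ^ 2) * hellinger σ μ0 μ1 ^ 2 := by
  rintro s ⟨hs0, hs1⟩
  set lam : Measure Ω := μ0 + μ1 + η with hlam
  have h0 : μ0 ≪ lam :=
    Measure.absolutelyContinuous_of_le (Measure.le_add_right (Measure.le_add_right le_rfl))
  have h1 : μ1 ≪ lam :=
    Measure.absolutelyContinuous_of_le (Measure.le_add_right (Measure.le_add_left le_rfl))
  have hη : η ≪ lam := Measure.absolutelyContinuous_of_le (Measure.le_add_left le_rfl)
  have hgm : geomMean μ0 μ1 ≪ lam := by
    rw [geomMean]
    exact (withDensity_absolutelyContinuous _ _).trans (ac_add' h0 h1)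
  have hγ : helGeodesic μ0 μ1 s ≪ lam := by
    rw [helGeodesic]
    exact ac_add' (ac_add' (Measure.smul_absolutelyContinuous.trans h0)
      (Measure.smul_absolutelyContinuous.trans h1))
      (Measure.smul_absolutelyContinuous.trans hgm)
  -- the square root of the density of the geodesic
  have hkey : (fun x => Real.sqrt (((helGeodesic μ0 μ1 s).rnDeriv lam x).toReal))
      =ᵐ[lam] fun x => (1 - s) * Real.sqrt ((μ0.rnDeriv lam x).toReal)
        + s * Real.sqrt ((μ1.rnDeriv lam x).toReal) := by
    have hc0 : (0:ℝ) ≤ (1 - s) ^ 2 := sq_nonneg _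
    have hc1 : (0:ℝ) ≤ s ^ 2 := sq_nonneg _
    have hc2 : (0:ℝ) ≤ 2 * (s - s ^ 2) := by nlinarith
    filter_upwards [rnDeriv_helGeodesic μ0 μ1 lam h0 h1 s,
      Measure.rnDeriv_lt_top μ0 lam, Measure.rnDeriv_lt_top μ1 lam] with x hx hx0 hx1
    rw [hx]
    have ht2 : (μ0.rnDeriv lam x * μ1.rnDeriv lam x) ^ (1/2 : ℝ) ≠ ∞ :=
      (ENNReal.rpow_lt_top_of_nonneg (by norm_num)
        (ENNReal.mul_ne_top hx0.ne hx1.ne)).ne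
    rw [ENNReal.toReal_add (ENNReal.add_ne_top.2
        ⟨ENNReal.mul_ne_top ENNReal.ofReal_ne_top hx0.ne,
          ENNReal.mul_ne_top ENNReal.ofReal_ne_top hx1.ne⟩)
        (ENNReal.mul_ne_top ENNReal.ofReal_ne_top ht2),
      ENNReal.toReal_add (ENNReal.mul_ne_top ENNReal.ofReal_ne_top hx0.ne)
        (ENNReal.mul_ne_top ENNReal.ofReal_ne_top hx1.ne),
      ENNReal.toReal_mul, ENNReal.toReal_mul, ENNReal.toReal_mul,
      ENNReal.toReal_ofReal hc0, ENNReal.toReal_ofReal hc1, ENNReal.toReal_ofReal hc2,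
      ← ENNReal.toReal_rpow, ENNReal.toReal_mul, ← Real.sqrt_eq_rpow,
      Real.sqrt_mul ENNReal.toReal_nonneg]
    have ha : Real.sqrt ((μ0.rnDeriv lam x).toReal) ^ 2 = (μ0.rnDeriv lam x).toReal :=
      Real.sq_sqrt ENNReal.toReal_nonneg
    have hb : Real.sqrt ((μ1.rnDeriv lam x).toReal) ^ 2 = (μ1.rnDeriv lam x).toReal :=
      Real.sq_sqrt ENNReal.toReal_nonneg
    have hsum : (1 - s) ^ 2 * (μ0.rnDeriv lam x).toReal + s ^ 2 * (μ1.rnDeriv lam x).toReal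
        + 2 * (s - s ^ 2) * (Real.sqrt ((μ0.rnDeriv lam x).toReal)
          * Real.sqrt ((μ1.rnDeriv lam x).toReal))
        = ((1 - s) * Real.sqrt ((μ0.rnDeriv lam x).toReal)
          + s * Real.sqrt ((μ1.rnDeriv lam x).toReal)) ^ 2 := by
      linear_combination (-((1 - s) ^ 2)) * ha + (-(s ^ 2)) * hb
    rw [hsum, Real.sqrt_sq (add_nonneg (mul_nonneg (by linarith) (Real.sqrt_nonneg _))
      (mul_nonneg hs0 (Real.sqrt_nonneg _)))]
  have e_geo : hellinger σ (helGeodesic μ0 μ1 s) η ^ 2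
      = σ ^ 2 * ∫ x, ((1 - s) * Real.sqrt ((μ0.rnDeriv lam x).toReal)
          + s * Real.sqrt ((μ1.rnDeriv lam x).toReal)
          - Real.sqrt ((η.rnDeriv lam x).toReal)) ^ 2 ∂lam := by
    rw [hellinger_sq_eq σ _ η lam hγ hη]
    congr 1
    refine integral_congr_ae ?_
    filter_upwards [hkey] with x hx
    rw [hx]
  have e0 := hellinger_sq_eq σ μ0 η lam h0 hη
  have e1 := hellinger_sq_eq σ μ1 η lam h1 hη
  have e01 := hellinger_sq_eq σ μ0 μ1 lam h0 h1
  have i0 := integrable_sq_sub μ0 η lam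
  have i1 := integrable_sq_sub μ1 η lam
  have i01 := integrable_sq_sub μ0 μ1 lam
  rw [e_geo, e0, e1, e01]
  have hpt : (fun x => ((1 - s) * Real.sqrt ((μ0.rnDeriv lam x).toReal)
        + s * Real.sqrt ((μ1.rnDeriv lam x).toReal)
        - Real.sqrt ((η.rnDeriv lam x).toReal)) ^ 2)
      = fun x => (1 - s) * (Real.sqrt ((μ0.rnDeriv lam x).toReal)
          - Real.sqrt ((η.rnDeriv lam x).toReal)) ^ 2
        + s * (Real.sqrt ((μ1.rnDeriv lam x).toReal)
          - Real.sqrt ((η.rnDeriv lam x).toReal)) ^ 2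
        - (s - s ^ 2) * (Real.sqrt ((μ0.rnDeriv lam x).toReal)
          - Real.sqrt ((μ1.rnDeriv lam x).toReal)) ^ 2 := by
    funext x; ring
  have iB : Integrable (fun x => (1 - s) * (Real.sqrt ((μ0.rnDeriv lam x).toReal)
      - Real.sqrt ((η.rnDeriv lam x).toReal)) ^ 2) lam := i0.const_mul _
  have iC : Integrable (fun x => s * (Real.sqrt ((μ1.rnDeriv lam x).toReal)
      - Real.sqrt ((η.rnDeriv lam x).toReal)) ^ 2) lam := i1.const_mul _
  have iA : Integrable (fun x => (1 - s) * (Real.sqrt ((μ0.rnDeriv lam x).toReal)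
      - Real.sqrt ((η.rnDeriv lam x).toReal)) ^ 2
      + s * (Real.sqrt ((μ1.rnDeriv lam x).toReal)
      - Real.sqrt ((η.rnDeriv lam x).toReal)) ^ 2) lam := iB.add iC
  have iD : Integrable (fun x => (s - s ^ 2) * (Real.sqrt ((μ0.rnDeriv lam x).toReal)
      - Real.sqrt ((μ1.rnDeriv lam x).toReal)) ^ 2) lam := i01.const_mul _
  rw [hpt, integral_sub iA iD, integral_add iB iC,
    integral_const_mul, integral_const_mul, integral_const_mul]
  ring
end

section
/- Let (Ω1, 𝔄1) and (Ω2, 𝔄2) be measurable spaces and let ν1, η1 be finite measures on Ω1 and ν2, η2 be finite measures on Ω2. Then the geometric mean of the product measures equals the product of the geometric means: √((ν1 ⊗ ν2)(η1 ⊗ η2)) = √(ν1 η1) ⊗ √(ν2 η2). -/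
open MeasureTheory ENNReal Real

variable {Ω : Type*} [MeasurableSpace Ω]

/-!
Both sides have a density with respect to `λ = (ν1 + η1) ⊗ (ν2 + η2)`. Since `√(μ0 μ1)` does not
depend on the reference measure, the left side has density `√(f g)` where `f`, `g` are the densities
of `ν1 ⊗ ν2` and `η1 ⊗ η2`; these factor as `f = f1 ⊗ f2` and `g = g1 ⊗ g2`, so
`√(f g) = √(f1 g1) ⊗ √(f2 g2)`, which is the density of the right side.
-/

lemma ENNReal.mul_self_rpow_half (c : ℝ≥0∞) : (c * c) ^ (1/2 : ℝ) = c := by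
  simpa [sq, one_div] using ENNReal.pow_rpow_inv_natCast two_ne_zero c

noncomputable def geomMeanDensity (μ0 μ1 lam : Measure Ω) (ω : Ω) : ℝ≥0∞ :=
  (μ0.rnDeriv lam ω * μ1.rnDeriv lam ω) ^ (1/2 : ℝ)

lemma measurable_geomMeanDensity (μ0 μ1 lam : Measure Ω) :
    Measurable (geomMeanDensity μ0 μ1 lam) :=
  ((μ0.measurable_rnDeriv lam).mul (μ1.measurable_rnDeriv lam)).pow_const _

lemma geomMean_eq_withDensity_geomMeanDensity {μ0 μ1 lam : Measure Ω}
    [SigmaFinite μ0] [SigmaFinite μ1] [SigmaFinite lam] (h0 : μ0 ≪ lam) (h1 : μ1 ≪ lam) :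
    geomMean μ0 μ1 = lam.withDensity (geomMeanDensity μ0 μ1 lam) := by
  set ρ := μ0 + μ1
  have hρ : ρ ≪ lam := h0.add_left h1
  have h0ρ : μ0 ≪ ρ := Measure.AbsolutelyContinuous.rfl.add_right μ1
  have h1ρ : μ1 ≪ ρ := Measure.AbsolutelyContinuous.rfl.add_right' μ0
  -- chain rule: `dμᵢ/dλ = (dμᵢ/dρ) (dρ/dλ)`, and the factor `dρ/dλ` leaves the square root
  have hchain : geomMeanDensity μ0 μ1 lam =ᵐ[lam] ρ.rnDeriv lam * geomMeanDensity μ0 μ1 ρ := by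
    filter_upwards [Measure.rnDeriv_mul_rnDeriv (κ := lam) h0ρ,
      Measure.rnDeriv_mul_rnDeriv (κ := lam) h1ρ] with ω h0ω h1ω
    simp only [geomMeanDensity, Pi.mul_apply]
    rw [← h0ω, ← h1ω, Pi.mul_apply, Pi.mul_apply, mul_mul_mul_comm,
      ENNReal.mul_rpow_of_nonneg _ _ (by norm_num), ENNReal.mul_self_rpow_half, mul_comm]
  rw [withDensity_congr_ae hchain, withDensity_mul _ (ρ.measurable_rnDeriv lam)
    (measurable_geomMeanDensity μ0 μ1 ρ), Measure.withDensity_rnDeriv_eq _ _ hρ]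
  rfl

section Prod

variable {Ω' : Type*} [MeasurableSpace Ω']

lemma MeasureTheory.Measure.rnDeriv_prod {μ lam : Measure Ω} {μ' lam' : Measure Ω'}
    [SigmaFinite μ] [SigmaFinite μ'] [SigmaFinite lam] [SigmaFinite lam']
    (h : μ ≪ lam) (h' : μ' ≪ lam') :
    (μ.prod μ').rnDeriv (lam.prod lam')
      =ᵐ[lam.prod lam'] fun p => μ.rnDeriv lam p.1 * μ'.rnDeriv lam' p.2 := by
  have hprod : μ.prod μ' = (lam.prod lam').withDensity
      (fun p => μ.rnDeriv lam p.1 * μ'.rnDeriv lam' p.2) := by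
    conv_lhs => rw [← Measure.withDensity_rnDeriv_eq _ _ h, ← Measure.withDensity_rnDeriv_eq _ _ h']
    exact prod_withDensity (μ.measurable_rnDeriv lam) (μ'.measurable_rnDeriv lam')
  rw [hprod]
  exact Measure.rnDeriv_withDensity _
    (((μ.measurable_rnDeriv lam).comp measurable_fst).mul
      ((μ'.measurable_rnDeriv lam').comp measurable_snd))

lemma geomMeanDensity_prod {ν η lam : Measure Ω} {ν' η' lam' : Measure Ω'}
    [SigmaFinite ν] [SigmaFinite η] [SigmaFinite lam]
    [SigmaFinite ν'] [SigmaFinite η'] [SigmaFinite lam']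
    (hν : ν ≪ lam) (hη : η ≪ lam) (hν' : ν' ≪ lam') (hη' : η' ≪ lam') :
    geomMeanDensity (ν.prod ν') (η.prod η') (lam.prod lam')
      =ᵐ[lam.prod lam'] fun p => geomMeanDensity ν η lam p.1 * geomMeanDensity ν' η' lam' p.2 := by
  filter_upwards [Measure.rnDeriv_prod hν hν', Measure.rnDeriv_prod hη hη'] with p hνp hηp
  simp only [geomMeanDensity]
  rw [hνp, hηp, mul_mul_mul_comm, ENNReal.mul_rpow_of_nonneg _ _ (by norm_num)]

end Prod

theorem geomMean_prod {Ω1 Ω2 : Type*} [MeasurableSpace Ω1] [MeasurableSpace Ω2]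
    (ν1 η1 : Measure Ω1) (ν2 η2 : Measure Ω2)
    [IsFiniteMeasure ν1] [IsFiniteMeasure η1] [IsFiniteMeasure ν2] [IsFiniteMeasure η2] :
    geomMean (ν1.prod ν2) (η1.prod η2) = (geomMean ν1 η1).prod (geomMean ν2 η2) := by
  have hν1 : ν1 ≪ ν1 + η1 := Measure.AbsolutelyContinuous.rfl.add_right η1
  have hη1 : η1 ≪ ν1 + η1 := Measure.AbsolutelyContinuous.rfl.add_right' ν1
  have hν2 : ν2 ≪ ν2 + η2 := Measure.AbsolutelyContinuous.rfl.add_right η2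
  have hη2 : η2 ≪ ν2 + η2 := Measure.AbsolutelyContinuous.rfl.add_right' ν2
  rw [geomMean_eq_withDensity_geomMeanDensity (hν1.prod hν2) (hη1.prod hη2),
    withDensity_congr_ae (geomMeanDensity_prod hν1 hη1 hν2 hη2),
    ← prod_withDensity (measurable_geomMeanDensity ν1 η1 _) (measurable_geomMeanDensity ν2 η2 _)]
  rfl
end

section
/- Let σ > 0 and let μ̃ be the restriction of Lebesgue measure on ℝ to the interval [0,1], i.e. the measure with density 1_{[0,1]}. For y ∈ ℝ let Φ^y : ℝ → ℝ be the translation x ↦ x + y. Then for all y, z ∈ ℝ: He_σ(Φ^y_# μ̃, Φ^z_# μ̃)² = 2σ² min(|y − z|, 1). Consequently, every non-constant continuous curve in the translation family {Φ^y_# μ̃ : y ∈ ℝ} has infinite Hellinger length. -/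
open MeasureTheory ENNReal Real

variable {Ω : Type*} [MeasurableSpace Ω]

/-- Continuity of a curve of measures w.r.t. the Hellinger distance on `[0,1]`. -/
def HelContinuous (σ : ℝ) (γ : ℝ → Measure Ω) : Prop :=
  ∀ s ∈ Set.Icc (0:ℝ) 1,
    Filter.Tendsto (fun t => hellinger σ (γ t) (γ s)) (nhdsWithin s (Set.Icc 0 1)) (nhds 0)

/-- The Hellinger length of a curve: the supremum over all partitions
`0 = s₀ < s₁ < ⋯ < s_N = 1` of the sums of Hellinger distances. -/
noncomputable def helLength (σ : ℝ) (γ : ℝ → Measure Ω) : ℝ≥0∞ :=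
  ⨆ (N : ℕ) (s : Fin (N + 1) → ℝ) (_ : StrictMono s) (_ : s 0 = 0)
      (_ : s (Fin.last N) = 1),
    ∑ i : Fin N, ENNReal.ofReal (hellinger σ (γ (s i.castSucc)) (γ (s i.succ)))

/-! The Hellinger distance between `μ.withDensity f` and `μ.withDensity g` is `σ ‖√f - √g‖₂`,
so for indicator densities it is `σ √(μ (s ∆ t))`; two unit intervals translated by `y` and `z`
have symmetric difference of length `2 min(|y - z|, 1)`.

Along a curve of translates `s ↦ Φ^{Y s}_# μ̃`, Hellinger continuity forces `Y` to be (uniformly)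
continuous, so on a fine uniform partition of `[0,1]` every increment `|ΔY|` is at most some small
`ε`, and the Hellinger increments are `σ √(2 |ΔY|) ≥ σ |ΔY| / √ε`. The total variation of `Y` along
fine partitions stays above `|Y t - Y s| / 2 > 0`, so the Hellinger sums exceed any bound. -/

open NNReal Set Filter Topology
open scoped symmDiff

section Hellinger

variable (μ : Measure Ω) [SigmaFinite μ]

lemma rnDeriv_withDensity_withDensity_add {f g : Ω → ℝ≥0∞} (hf : Measurable f)
    (hg : Measurable g) (hfg : ∀ᵐ x ∂μ, f x + g x ≠ ∞) :
    (μ.withDensity f).rnDeriv (μ.withDensity (f + g))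
      =ᵐ[μ.withDensity (f + g)] fun x => f x / (f x + g x) := by
  have : SigmaFinite (μ.withDensity (f + g)) := SigmaFinite.withDensity_of_ne_top (f := f + g) hfg
  refine (Measure.eq_rnDeriv (μ := μ.withDensity f) (hf.div (hf.add hg))
    Measure.MutuallySingular.zero_left ?_).symm
  rw [zero_add, ← withDensity_mul _ (hf.add hg) (hf.div (hf.add hg))]
  refine withDensity_congr_ae ?_
  filter_upwards [hfg] with x hx
  rcases eq_or_ne (f x + g x) 0 with h0 | h0
  · simp [(add_eq_zero.1 h0).1]
  · exact (ENNReal.mul_div_cancel h0 hx).symm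

lemma add_mul_sqrt_div_sub_sqrt_div_sq {a b : ℝ} (ha : 0 ≤ a) (hb : 0 ≤ b) :
    (a + b) * (√(a / (a + b)) - √(b / (a + b))) ^ 2 = (√a - √b) ^ 2 := by
  rcases eq_or_lt_of_le (add_nonneg ha hb) with h0 | hpos
  · obtain ⟨rfl, rfl⟩ : a = 0 ∧ b = 0 := ⟨by linarith, by linarith⟩
    simp
  · rw [Real.sqrt_div' _ hpos.le, Real.sqrt_div' _ hpos.le, div_sub_div_same, div_pow,
      Real.sq_sqrt hpos.le, mul_div_cancel₀ _ hpos.ne']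

theorem hellinger_withDensity_s18 (σ : ℝ) {f g : Ω → ℝ≥0} (hf : Measurable f) (hg : Measurable g) :
    hellinger σ (μ.withDensity fun x => f x) (μ.withDensity fun x => g x)
      = σ * √(∫ x, (√(f x) - √(g x)) ^ 2 ∂μ) := by
  set F : Ω → ℝ≥0∞ := fun x => f x
  set G : Ω → ℝ≥0∞ := fun x => g x
  have hF : Measurable F := hf.coe_nnreal_ennreal
  have hG : Measurable G := hg.coe_nnreal_ennreal
  have hFG : ∀ᵐ x ∂μ, F x + G x ≠ ∞ := .of_forall fun x => by finiteness
  have hF' := rnDeriv_withDensity_withDensity_add μ hF hG hFG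
  have hG' := rnDeriv_withDensity_withDensity_add μ hG hF (by simpa only [add_comm] using hFG)
  have hsum : F + G = fun x => ((f + g) x : ℝ≥0∞) := by
    ext x; simp [F, G]
  rw [add_comm G F] at hG'
  rw [hellinger, ← withDensity_add_left hF,
    integral_congr_ae (by filter_upwards [hF', hG'] with x hFx hGx; rw [hFx, hGx]), hsum,
    integral_withDensity_eq_integral_smul (hf.add hg)]
  congr 3 with x
  have hdiv (a b c : ℝ≥0) : ((a : ℝ≥0∞) / (b + c)).toReal = a / (b + c) := by
    rw [ENNReal.toReal_div, ← ENNReal.coe_add]; rfl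
  simp only [F, G, Pi.add_apply, hdiv, NNReal.smul_def, NNReal.coe_add, smul_eq_mul]
  rw [add_comm (g x : ℝ)]
  exact add_mul_sqrt_div_sub_sqrt_div_sq (f x).coe_nonneg (g x).coe_nonneg

theorem hellinger_restrict (σ : ℝ) {s t : Set Ω} (hs : MeasurableSet s) (ht : MeasurableSet t) :
    hellinger σ (μ.restrict s) (μ.restrict t) = σ * √(μ.real (s ∆ t)) := by
  have hind (u : Set Ω) (hu : MeasurableSet u) :
      μ.restrict u = μ.withDensity fun x => ((u.indicator (1 : Ω → ℝ≥0) x : ℝ≥0) : ℝ≥0∞) := by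
    rw [← withDensity_indicator_one hu]
    congr with x
    by_cases hx : x ∈ u <;> simp [hx]
  rw [hind s hs, hind t ht, hellinger_withDensity_s18 μ σ (measurable_one.indicator hs)
    (measurable_one.indicator ht)]
  have hsq (x : Ω) : (√((s.indicator (1 : Ω → ℝ≥0) x : ℝ≥0) : ℝ)
      - √((t.indicator (1 : Ω → ℝ≥0) x : ℝ≥0) : ℝ)) ^ 2
      = (s ∆ t).indicator 1 x := by
    by_cases hs : x ∈ s <;> by_cases ht : x ∈ t <;> simp [hs, ht, Set.mem_symmDiff]
  simp_rw [hsq, integral_indicator_one (hs.symmDiff ht)]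

end Hellinger

lemma volume_real_Icc_add_symmDiff {a b : ℝ} (hab : a ≤ b) (y z : ℝ) :
    volume.real (Icc (a + y) (b + y) ∆ Icc (a + z) (b + z)) = 2 * min |y - z| (b - a) := by
  have hfin (c : ℝ) : volume (Icc (a + c) (b + c)) ≠ ∞ := measure_Icc_lt_top.ne
  have hdiff (c d : ℝ) : volume.real (Icc (a + c) (b + c) \ Icc (a + d) (b + d))
      = min |c - d| (b - a) := by
    have hsplit := measureReal_inter_add_sdiff (s := Icc (a + c) (b + c))
      (t := Icc (a + d) (b + d)) measurableSet_Icc (hfin c)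
    have hlen : min (b + c) (b + d) - max (a + c) (a + d) = b - a - |c - d| := by
      rw [min_add_add_left, max_add_add_left, ← max_sub_min_eq_abs']
      ring
    rw [Icc_inter_Icc, volume_real_Icc, hlen, volume_real_Icc_of_le (by linarith)] at hsplit
    grind
  rw [measureReal_symmDiff_eq measurableSet_Icc measurableSet_Icc (hfin y) (hfin z), hdiff,
    hdiff, abs_sub_comm z y]
  ring

lemma map_add_right_restrict {G : Type*} [MeasurableSpace G] [AddGroup G] [MeasurableAdd G]
    (μ : Measure G) [μ.IsAddRightInvariant] (g : G) (s : Set G) :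
    (μ.restrict s).map (· + g) = μ.restrict ((· + g) '' s) := by
  conv_rhs => rw [← map_add_right_eq_self μ g, (measurableEmbedding_addRight g).restrict_map,
    preimage_image_eq _ (add_left_injective g)]

theorem hellinger_map_add_restrict_Icc (σ : ℝ) {a b : ℝ} (hab : a ≤ b) (y z : ℝ) :
    hellinger σ ((volume.restrict (Icc a b)).map (· + y)) ((volume.restrict (Icc a b)).map (· + z))
      = σ * √(2 * min |y - z| (b - a)) := by
  rw [map_add_right_restrict, map_add_right_restrict, image_add_const_Icc, image_add_const_Icc,
    hellinger_restrict _ _ measurableSet_Icc measurableSet_Icc, volume_real_Icc_add_symmDiff hab]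

lemma natCast_div_mem_Icc {k n : ℕ} (h : k ≤ n) : (k / n : ℝ) ∈ Icc (0 : ℝ) 1 :=
  ⟨by positivity, div_le_one_of_le₀ (by exact_mod_cast h) n.cast_nonneg⟩

lemma dist_le_range_sum_dist_of_le {α : Type*} [PseudoMetricSpace α] (f : ℕ → α) {p q n : ℕ}
    (hp : p ≤ n) (hq : q ≤ n) : dist (f p) (f q) ≤ ∑ i ∈ Finset.range n, dist (f i) (f (i + 1)) := by
  wlog hpq : p ≤ q generalizing p q
  · rw [dist_comm]
    exact this hq hp (le_of_not_ge hpq)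
  calc dist (f p) (f q) ≤ ∑ i ∈ Finset.Ico p q, dist (f i) (f (i + 1)) :=
        dist_le_Ico_sum_dist f hpq
    _ ≤ _ := Finset.sum_le_sum_of_subset_of_nonneg
      (fun i hi => by simp only [Finset.mem_Ico, Finset.mem_range] at hi ⊢; omega)
      (fun _ _ _ => dist_nonneg)

lemma tendsto_floor_mul_div_nhdsWithin_Icc {s : ℝ} (hs : s ∈ Icc (0 : ℝ) 1) :
    Tendsto (fun n : ℕ => (⌊s * n⌋₊ : ℝ) / n) atTop (𝓝[Icc 0 1] s) := by
  refine tendsto_nhdsWithin_iff.2 ⟨(tendsto_nat_floor_mul_div_atTop hs.1).comp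
    tendsto_natCast_atTop_atTop, .of_forall fun n => natCast_div_mem_Icc ?_⟩
  exact Nat.floor_le_of_le (mul_le_of_le_one_left n.cast_nonneg hs.2)

section Grid

variable {Y : ℝ → ℝ}

lemma eventually_le_sum_dist_grid (hY : ContinuousOn Y (Icc 0 1)) {s t : ℝ}
    (hs : s ∈ Icc (0 : ℝ) 1) (ht : t ∈ Icc (0 : ℝ) 1) {c : ℝ} (hc : c < dist (Y s) (Y t)) :
    ∀ᶠ n : ℕ in atTop, c ≤ ∑ k ∈ Finset.range n, dist (Y (k / n)) (Y ((k + 1 : ℕ) / n)) := by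
  have hgrid {u : ℝ} (hu : u ∈ Icc (0 : ℝ) 1) :
      Tendsto (fun n : ℕ => Y (⌊u * n⌋₊ / n)) atTop (𝓝 (Y u)) :=
    (hY u hu).tendsto.comp (tendsto_floor_mul_div_nhdsWithin_Icc hu)
  have hfloor {u : ℝ} (hu : u ∈ Icc (0 : ℝ) 1) (n : ℕ) : ⌊u * n⌋₊ ≤ n :=
    Nat.floor_le_of_le (mul_le_of_le_one_left n.cast_nonneg hu.2)
  filter_upwards [((hgrid hs).dist (hgrid ht)).eventually (lt_mem_nhds hc)] with n hn
  exact hn.le.trans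
    (dist_le_range_sum_dist_of_le (fun k : ℕ => Y (k / n)) (hfloor hs n) (hfloor ht n))

lemma eventually_forall_dist_grid_lt (hY : ContinuousOn Y (Icc 0 1)) {ε : ℝ} (hε : 0 < ε) :
    ∀ᶠ n : ℕ in atTop, ∀ k < n, dist (Y (k / n)) (Y ((k + 1 : ℕ) / n)) < ε := by
  obtain ⟨δ, hδ, hYδ⟩ := Metric.uniformContinuousOn_iff.1
    (isCompact_Icc.uniformContinuousOn_of_continuous hY) ε hε
  obtain ⟨N, hN⟩ := exists_nat_one_div_lt hδ
  filter_upwards [eventually_gt_atTop N] with n hn k hk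
  refine hYδ _ (natCast_div_mem_Icc hk.le) _ (natCast_div_mem_Icc hk) ?_
  have hn' : (0 : ℝ) < n := by exact_mod_cast (N.zero_le.trans_lt hn)
  rw [Real.dist_eq, abs_sub_comm, Nat.cast_succ, add_div, add_sub_cancel_left,
    abs_of_pos (by positivity)]
  calc 1 / (n : ℝ) ≤ 1 / ((N : ℝ) + 1) :=
        one_div_le_one_div_of_le (by positivity) (by exact_mod_cast hn)
    _ < δ := hN

lemma sum_div_sqrt_le_sum_sqrt {ι : Type*} (s : Finset ι) {x : ι → ℝ} {ε : ℝ} (hε : 0 < ε)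
    (hx : ∀ i ∈ s, 0 ≤ x i ∧ x i ≤ ε) : (∑ i ∈ s, x i) / √ε ≤ ∑ i ∈ s, √(x i) := by
  rw [Finset.sum_div]
  refine Finset.sum_le_sum fun i hi => ?_
  obtain ⟨hx0, hxε⟩ := hx i hi
  rw [div_le_iff₀ (Real.sqrt_pos.2 hε)]
  calc x i = √(x i) * √(x i) := (Real.mul_self_sqrt hx0).symm
    _ ≤ √(x i) * √ε := by gcongr

theorem tendsto_sum_sqrt_dist_grid (hY : ContinuousOn Y (Icc 0 1)) {s t : ℝ}
    (hs : s ∈ Icc (0 : ℝ) 1) (ht : t ∈ Icc (0 : ℝ) 1) (hne : Y s ≠ Y t) :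
    Tendsto (fun n : ℕ => ∑ k ∈ Finset.range n, √(dist (Y (k / n)) (Y ((k + 1 : ℕ) / n))))
      atTop atTop := by
  set d := dist (Y s) (Y t)
  have hd : 0 < d := dist_pos.2 hne
  refine tendsto_atTop.2 fun M => ?_
  -- chosen so that `(d / 2) / √ε = |M| + 1`
  set ε := (d / (2 * (|M| + 1))) ^ 2
  have hε : 0 < ε := by positivity
  filter_upwards [eventually_le_sum_dist_grid hY hs ht (half_lt_self hd),
    eventually_forall_dist_grid_lt hY hε] with n hsum hmesh
  calc M ≤ (d / 2) / √ε := by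
        rw [Real.sqrt_sq (by positivity)]
        field_simp
        linarith [le_abs_self M]
    _ ≤ (∑ k ∈ Finset.range n, dist (Y (k / n)) (Y ((k + 1 : ℕ) / n))) / √ε := by gcongr
    _ ≤ _ := sum_div_sqrt_le_sum_sqrt _ hε fun k hk =>
        ⟨dist_nonneg, (hmesh k (Finset.mem_range.1 hk)).le⟩

end Grid

lemma sum_grid_le_helLength (σ : ℝ) (γ : ℝ → Measure Ω) {n : ℕ}
    (hn : 0 < n) :
    ∑ k ∈ Finset.range n, ENNReal.ofReal (hellinger σ (γ (k / n)) (γ ((k + 1 : ℕ) / n)))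
      ≤ helLength σ γ := by
  set s : Fin (n + 1) → ℝ := fun k => (k : ℕ) / n
  have hs : StrictMono s := fun i j hij =>
    div_lt_div_of_pos_right (by exact_mod_cast hij) (by exact_mod_cast hn)
  have hs0 : s 0 = 0 := by simp [s]
  have hs1 : s (Fin.last n) = 1 := by simp [s, hn.ne']
  calc _ = ∑ i : Fin n, ENNReal.ofReal (hellinger σ (γ (s i.castSucc)) (γ (s i.succ))) :=
        (Fin.sum_univ_eq_sum_range
          (fun k => ENNReal.ofReal (hellinger σ (γ (k / n)) (γ ((k + 1 : ℕ) / n)))) n).symm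
    _ ≤ helLength σ γ := le_iSup_of_le n <| le_iSup_of_le s <| le_iSup_of_le hs <|
        le_iSup_of_le hs0 <| le_iSup_of_le hs1 le_rfl

section TranslationCurve

variable {σ : ℝ} {γ : ℝ → Measure ℝ} {Y : ℝ → ℝ}
  (hγ : ∀ s ∈ Icc (0 : ℝ) 1, γ s = (volume.restrict (Icc (0 : ℝ) 1)).map (· + Y s))
include hγ

lemma hellinger_eq_sqrt_min_dist {s t : ℝ} (hs : s ∈ Icc (0 : ℝ) 1) (ht : t ∈ Icc (0 : ℝ) 1) :
    hellinger σ (γ s) (γ t) = σ * √(2 * min (dist (Y s) (Y t)) 1) := by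
  rw [hγ s hs, hγ t ht, hellinger_map_add_restrict_Icc σ zero_le_one, sub_zero, Real.dist_eq]

lemma continuousOn_of_helContinuous (hσ : 0 < σ) (hcont : HelContinuous σ γ) :
    ContinuousOn Y (Icc 0 1) := by
  intro s hs
  have hmin : Tendsto (fun t => min (dist (Y t) (Y s)) 1) (𝓝[Icc 0 1] s) (𝓝 0) := by
    have h := (((hcont s hs).div_const σ).pow 2).div_const 2
    rw [zero_div, zero_pow two_ne_zero, zero_div] at h
    refine h.congr' ?_
    filter_upwards [self_mem_nhdsWithin] with t ht
    rw [hellinger_eq_sqrt_min_dist hγ ht hs, mul_div_cancel_left₀ _ hσ.ne',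
      Real.sq_sqrt (by positivity)]
    ring
  refine tendsto_iff_dist_tendsto_zero.2 (hmin.congr' ?_)
  filter_upwards [hmin.eventually (gt_mem_nhds one_pos)] with t ht
  exact min_eq_left (le_of_lt (by simpa using ht))

theorem helLength_eq_top_of_translate (hσ : 0 < σ) (hY : ContinuousOn Y (Icc 0 1)) {s t : ℝ}
    (hs : s ∈ Icc (0 : ℝ) 1) (ht : t ∈ Icc (0 : ℝ) 1) (hne : Y s ≠ Y t) :
    helLength σ γ = ⊤ := by
  have hlim := ENNReal.tendsto_ofReal_atTop.comp
    ((tendsto_sum_sqrt_dist_grid hY hs ht hne).const_mul_atTop hσ)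
  refine top_le_iff.1 (le_of_tendsto hlim ?_)
  filter_upwards [eventually_forall_dist_grid_lt hY one_pos, eventually_gt_atTop 0]
    with n hmesh hn
  refine le_trans ?_ (sum_grid_le_helLength σ γ hn)
  rw [Function.comp_apply, Finset.mul_sum, ENNReal.ofReal_sum_of_nonneg fun _ _ => by positivity]
  refine Finset.sum_le_sum fun k hk => ENNReal.ofReal_le_ofReal ?_
  have hk := Finset.mem_range.1 hk
  rw [hellinger_eq_sqrt_min_dist hγ (natCast_div_mem_Icc hk.le) (natCast_div_mem_Icc hk),
    min_eq_left (hmesh k hk).le]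
  gcongr
  linarith [dist_nonneg (x := Y (k / n)) (y := Y ((k + 1 : ℕ) / n))]

end TranslationCurve

theorem hellinger_translated_uniform (σ : ℝ) (hσ : 0 < σ) :
    letI μt : Measure ℝ := volume.restrict (Set.Icc (0:ℝ) 1)
    (∀ y z : ℝ,
        hellinger σ (μt.map (fun x => x + y)) (μt.map (fun x => x + z)) ^ 2 =
          2 * σ ^ 2 * min |y - z| 1) ∧
      ∀ γ : ℝ → Measure ℝ, HelContinuous σ γ →
        (∀ s ∈ Set.Icc (0:ℝ) 1, γ s ∈ {μ | ∃ y : ℝ, μ = μt.map (fun x => x + y)}) →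
        (∃ s ∈ Set.Icc (0:ℝ) 1, ∃ t ∈ Set.Icc (0:ℝ) 1, γ s ≠ γ t) →
        helLength σ γ = ⊤ := by
  refine ⟨fun y z => ?_, fun γ hcont hmem ⟨s, hs, t, ht, hne⟩ => ?_⟩
  · rw [hellinger_map_add_restrict_Icc σ zero_le_one, sub_zero, mul_pow,
      Real.sq_sqrt (by positivity)]
    ring
  · choose! Y hY using hmem
    refine helLength_eq_top_of_translate hY hσ (continuousOn_of_helContinuous hY hσ hcont) hs ht ?_
    exact fun hYst => hne (by rw [hY s hs, hY t ht, hYst])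
end
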